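/- Let α > −1 and β > 0, and fix n ∈ ℕ and x ∈ ℝ. Then lim_{h→∞} h^{−n}·Î_n(h·x; (β+1)/2 + ih, (β+1)/2 − ih, α+1) = G_n(x;α,β), where the limit is over real h → +∞, Î_n are the generalized symmetric Bannai–Ito polynomials and G_n(x;α,β) are the monic generalized Gegenbauer polynomials. -/

import Mathlib

open Polynomial Finset Complex Filter

/-- The Pochhammer symbol `(a)ₖ = a(a+1)⋯(a+k-1)` for complex `a`. -/
noncomputable def pochC (a : ℂ) (k : ℕ) : ℂ := (ascPochhammer ℂ k).eval a

/-- The generalized symmetric Bannai–Ito polynomials `Îₙ(x;a,b,c)`, given by their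
Wilson-type terminating ₄F₃ hypergeometric expressions. -/
noncomputable def gsBI (a b c : ℂ) (n : ℕ) : Polynomial ℂ :=
  let m : ℕ := n / 2
  if Even n then
    C ((-1 : ℂ) ^ m * pochC a m * pochC b m * pochC c m /
        pochC ((m : ℂ) + a + b + c - 1) m) *
      ∑ k ∈ range (m + 1),
        C (pochC (-(m : ℂ)) k * pochC ((m : ℂ) + a + b + c - 1) k /
            (pochC a k * pochC b k * pochC c k * (k.factorial : ℂ))) *
          ∏ j ∈ range k, (C ((j : ℂ) ^ 2) + X ^ 2)
  else
    C ((-1 : ℂ) ^ m * pochC (1 + a) m * pochC (1 + b) m * pochC (1 + c) m /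
        pochC ((m : ℂ) + a + b + c) m) * X *
      ∑ k ∈ range (m + 1),
        C (pochC (-(m : ℂ)) k * pochC ((m : ℂ) + a + b + c) k /
            (pochC (1 + a) k * pochC (1 + b) k * pochC (1 + c) k * (k.factorial : ℂ))) *
          ∏ j ∈ Icc 1 k, (C ((j : ℂ) ^ 2) + X ^ 2)

/-- The recurrence coefficients `σₙ` of the monic generalized Gegenbauer polynomials. -/
noncomputable def genGegenbauerSigma (α β : ℝ) (n : ℕ) : ℝ :=
  let m : ℕ := n / 2
  if Even n then
    (m : ℝ) * ((m : ℝ) + β) / ((2 * (m : ℝ) + α + β) * (2 * (m : ℝ) + α + β + 1))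
  else
    ((m : ℝ) + α + 1) * ((m : ℝ) + α + β + 1) /
      ((2 * (m : ℝ) + α + β + 1) * (2 * (m : ℝ) + α + β + 2))

/-- Monic generalized Gegenbauer polynomials, shifted so that
`genGegenbauer α β (n+1) = Gₙ` (`genGegenbauer α β 0 = G₋₁ = 0`). -/
noncomputable def genGegenbauer (α β : ℝ) : ℕ → Polynomial ℝ
  | 0 => 0
  | 1 => 1
  | (k + 2) =>
      X * genGegenbauer α β (k + 1) - C (genGegenbauerSigma α β k) * genGegenbauer α β k

/-!
For `a, b = w ± ih` one has `(a)ₖ (b)ₖ = ∏_{j<k} ((w + j)² + h²)`, so after division by `hⁿ`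
the Wilson-type series of `Îₙ(hx)` has real terms: the prefactor contributes
`∏_{j<m} ((w + j)² + h²) / h² → 1`, and the `k`-th term the ratios
`((j + s)² + h²x²) / ((w + j)² + h²) → x²`, with `s = 0` for even and `s = 1` for odd `n`.
The limits are `(−1)ᵐ (c)ₘ/(d)ₘ ₂F₁(−m, d; c; x²)` with `(c, d) = (α + 1, m + α + β + 1)` for
`n = 2m` and, times `x`, with `(c, d) = (α + 2, m + α + β + 2)` for `n = 2m + 1`. The three-term
recurrence of `Gₙ` then comes down to two contiguous relations of these terminating ₂F₁ series,
which are identities between their coefficients.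
-/

theorem pochC_eq_prod (z : ℂ) (k : ℕ) : pochC z k = ∏ j ∈ range k, (z + j) := by
  induction k with
  | zero => simp [pochC]
  | succ k ih => rw [pochC, ascPochhammer_succ_eval, ← pochC, ih, prod_range_succ]

theorem pochC_ofReal (r : ℝ) (k : ℕ) : pochC r k = (ascPochhammer ℝ k).eval r := by
  rw [pochC, ← ascPochhammer_map ofRealHom, eval_map, ← ofRealHom_eq_coe, eval₂_at_apply,
    ofRealHom_eq_coe]

theorem pochC_mul_pochC_conj (w h : ℝ) (k : ℕ) :
    pochC (w + I * h) k * pochC (w - I * h) k =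
      ((∏ j ∈ range k, ((w + j) ^ 2 + h ^ 2) : ℝ) : ℂ) := by
  simp only [pochC_eq_prod, ← prod_mul_distrib]
  push_cast
  refine prod_congr rfl fun j _ => ?_
  linear_combination (-(h : ℂ) ^ 2) * I_sq

theorem ascPochhammer_eval_add_one {K : Type*} [Field K] {a : K} (ha : a ≠ 0) (k : ℕ) :
    (ascPochhammer K k).eval (a + 1) = (ascPochhammer K k).eval a * (a + k) / a := by
  rw [eq_div_iff ha, ← ascPochhammer_succ_eval, ascPochhammer_succ_left]
  simp [eval_comp, mul_comm]

theorem tendsto_quadratic_div (c d u : ℝ) :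
    Tendsto (fun h : ℝ => (c + h ^ 2 * u) / (d + h ^ 2)) atTop (nhds u) := by
  have hden : Tendsto (fun h : ℝ => d + h ^ 2) atTop atTop :=
    tendsto_atTop_add_const_left _ d (tendsto_pow_atTop two_ne_zero)
  have hlim := (tendsto_const_nhds (x := u)).add
    ((tendsto_const_nhds (x := c - d * u)).div_atTop hden)
  rw [add_zero] at hlim
  refine hlim.congr' ((hden.eventually_ne_atTop 0).mono fun h hh => ?_)
  field_simp
  ring

/-- The common shape of `Î₂ₘ` and `Î₂ₘ₊₁ / x`; the nodes `j²` of the products are shifted to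
`(j + s)²`. -/
noncomputable def bannaiItoSum (a b c d : ℂ) (s m : ℕ) (z : ℂ) : ℂ :=
  (-1) ^ m * pochC a m * pochC b m * pochC c m / pochC d m *
    ∑ k ∈ range (m + 1),
      pochC (-(m : ℂ)) k * pochC d k / (pochC a k * pochC b k * pochC c k * k.factorial) *
        ∏ j ∈ range k, (((j + s : ℕ) : ℂ) ^ 2 + z ^ 2)

theorem eval_gsBI_two_mul (a b c z : ℂ) (m : ℕ) :
    (gsBI a b c (2 * m)).eval z = bannaiItoSum a b c (m + a + b + c - 1) 0 m z := by
  have hm : 2 * m / 2 = m := by omega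
  simp only [gsBI, hm, even_two_mul, if_true, bannaiItoSum, eval_mul, eval_C, eval_finsetSum,
    eval_prod, eval_add, eval_pow, eval_X, Nat.add_zero]

theorem eval_gsBI_two_mul_add_one (a b c z : ℂ) (m : ℕ) :
    (gsBI a b c (2 * m + 1)).eval z =
      z * bannaiItoSum (1 + a) (1 + b) (1 + c) (m + a + b + c) 1 m z := by
  have hm : (2 * m + 1) / 2 = m := by omega
  have hIcc (k : ℕ) : ∏ j ∈ Icc 1 k, ((j : ℂ) ^ 2 + z ^ 2) =
      ∏ j ∈ range k, (((j + 1 : ℕ) : ℂ) ^ 2 + z ^ 2) := by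
    rw [← Finset.Ico_add_one_right_eq_Icc, prod_Ico_eq_prod_range, Nat.add_sub_cancel]
    simp only [add_comm 1, Nat.cast_add, Nat.cast_one]
  simp only [gsBI, hm, Nat.not_even_two_mul_add_one, if_false, bannaiItoSum, eval_mul, eval_C,
    eval_finsetSum, eval_prod, eval_add, eval_pow, eval_X, hIcc]
  ring

/-- The coefficients of `(-1)ᵐ (c)ₘ / (d)ₘ · ₂F₁(-m, d; c; y)`, a monic polynomial of degree `m`
in `y`: a Jacobi polynomial up to normalisation and an affine change of variable. -/
noncomputable def monicJacobiCoeff (c d : ℝ) (m k : ℕ) : ℝ :=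
  (-1) ^ m * (ascPochhammer ℝ m).eval c / (ascPochhammer ℝ m).eval d *
    ((ascPochhammer ℝ k).eval (-(m : ℝ)) * (ascPochhammer ℝ k).eval d /
      ((ascPochhammer ℝ k).eval c * k.factorial))

noncomputable def monicJacobi (c d : ℝ) (m : ℕ) (y : ℝ) : ℝ :=
  ∑ k ∈ range (m + 1), monicJacobiCoeff c d m k * y ^ k

theorem inv_mul_bannaiItoSum_eq (w c d h x : ℝ) (s m : ℕ) :
    ((h : ℂ) ^ (2 * m))⁻¹ * bannaiItoSum (w + I * h) (w - I * h) c d s m ((h * x : ℝ) : ℂ) =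
      ((∑ k ∈ range (m + 1), monicJacobiCoeff c d m k *
        (∏ j ∈ range m, (((w + j) ^ 2 + h ^ 2) / h ^ 2)) *
          ∏ j ∈ range k, ((((j + s : ℕ) : ℝ) ^ 2 + (h * x) ^ 2) / ((w + j) ^ 2 + h ^ 2)) : ℝ) :
        ℂ) := by
  have hneg : -(m : ℂ) = ((-(m : ℝ) : ℝ) : ℂ) := by push_cast; rfl
  simp only [bannaiItoSum, mul_assoc ((-1 : ℂ) ^ m), pochC_mul_pochC_conj, hneg,
    pochC_ofReal, prod_div_distrib, prod_const, card_range, monicJacobiCoeff, mul_sum]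
  push_cast
  refine sum_congr rfl fun k _ => ?_
  rw [pow_mul]
  ring

theorem tendsto_bannaiItoSum (w c d x : ℝ) (s m : ℕ) :
    Tendsto (fun h : ℝ => ((h : ℂ) ^ (2 * m))⁻¹ *
        bannaiItoSum (w + I * h) (w - I * h) c d s m ((h * x : ℝ) : ℂ))
      atTop (nhds (monicJacobi c d m (x ^ 2) : ℂ)) := by
  simp only [inv_mul_bannaiItoSum_eq]
  refine Tendsto.ofReal ?_
  have hprefactor (j : ℕ) :
      Tendsto (fun h : ℝ => ((w + j) ^ 2 + h ^ 2) / h ^ 2) atTop (nhds 1) := by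
    simpa using tendsto_quadratic_div ((w + j) ^ 2) 0 1
  have hratio (j : ℕ) : Tendsto (fun h : ℝ => (((j + s : ℕ) : ℝ) ^ 2 + (h * x) ^ 2) /
      ((w + j) ^ 2 + h ^ 2)) atTop (nhds (x ^ 2)) := by
    simpa [mul_pow, mul_comm] using
      tendsto_quadratic_div (((j + s : ℕ) : ℝ) ^ 2) ((w + j) ^ 2) (x ^ 2)
  have hterms := tendsto_finsetSum (range (m + 1)) fun k _ =>
    ((tendsto_const_nhds (x := monicJacobiCoeff c d m k)).mul
      (tendsto_finsetProd (range m) fun j _ => hprefactor j)).mul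
      (tendsto_finsetProd (range k) fun j _ => hratio j)
  simpa [monicJacobi] using hterms

theorem tendsto_eval_gsBI_two_mul (w c x : ℝ) (m : ℕ) :
    Tendsto (fun h : ℝ => ((h : ℂ) ^ (2 * m))⁻¹ *
        (gsBI (w + I * h) (w - I * h) c (2 * m)).eval ((h * x : ℝ) : ℂ))
      atTop (nhds (monicJacobi c (m + 2 * w + c - 1) m (x ^ 2) : ℂ)) := by
  have hd (h : ℝ) :
      (m : ℂ) + (w + I * h) + (w - I * h) + c - 1 = ((m + 2 * w + c - 1 : ℝ) : ℂ) := by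
    push_cast
    ring
  simpa only [eval_gsBI_two_mul, hd] using tendsto_bannaiItoSum w c (m + 2 * w + c - 1) x 0 m

theorem tendsto_eval_gsBI_two_mul_add_one (w c x : ℝ) (m : ℕ) :
    Tendsto (fun h : ℝ => ((h : ℂ) ^ (2 * m + 1))⁻¹ *
        (gsBI (w + I * h) (w - I * h) c (2 * m + 1)).eval ((h * x : ℝ) : ℂ))
      atTop (nhds ((x * monicJacobi (c + 1) (m + 2 * w + c) m (x ^ 2) : ℝ) : ℂ)) := by
  have ha (h : ℝ) : 1 + ((w : ℂ) + I * h) = ((w + 1 : ℝ) : ℂ) + I * h := by push_cast; ring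
  have hb (h : ℝ) : 1 + ((w : ℂ) - I * h) = ((w + 1 : ℝ) : ℂ) - I * h := by push_cast; ring
  have hc : 1 + (c : ℂ) = ((c + 1 : ℝ) : ℂ) := by push_cast; ring
  have hd (h : ℝ) : (m : ℂ) + (w + I * h) + (w - I * h) + c = ((m + 2 * w + c : ℝ) : ℂ) := by
    push_cast
    ring
  have hlim := (tendsto_bannaiItoSum (w + 1) (c + 1) (m + 2 * w + c) x 1 m).const_mul (x : ℂ)
  rw [ofReal_mul]
  refine hlim.congr' ((eventually_ne_atTop 0).mono fun h hh => ?_)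
  have hh' : (h : ℂ) ≠ 0 := ofReal_ne_zero.2 hh
  simp only [eval_gsBI_two_mul_add_one, ha, hb, hc, hd, pow_succ, ofReal_mul]
  field_simp

theorem monicJacobi_zero (c d y : ℝ) : monicJacobi c d 0 y = 1 := by
  simp [monicJacobi, monicJacobiCoeff]

theorem monicJacobiCoeff_eq_zero_of_lt (c d : ℝ) {m k : ℕ} (h : m < k) :
    monicJacobiCoeff c d m k = 0 := by
  simp [monicJacobiCoeff, ascPochhammer_eval_neg_coe_nat_of_lt h]

theorem monicJacobi_eq_sum_range (c d : ℝ) {m N : ℕ} (hN : m < N) (y : ℝ) :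
    monicJacobi c d m y = ∑ k ∈ range N, monicJacobiCoeff c d m k * y ^ k := by
  refine sum_subset (range_subset_range.2 hN) fun k _ hk => ?_
  rw [monicJacobiCoeff_eq_zero_of_lt c d (by simpa using hk), zero_mul]

theorem monicJacobiCoeff_contiguous_right {A D : ℝ} (hA : 0 < A) (hD : 0 < D) (m k : ℕ) :
    monicJacobiCoeff (A + 1) (D + 1) (m + 1) k = monicJacobiCoeff A D (m + 1) k -
      (m + 1) * (D - A) / ((D + m) * (D + m + 1)) * monicJacobiCoeff (A + 1) D m k := by
  have hM : -(m : ℝ) - 1 ≠ 0 := by linarith [(m.cast_nonneg : (0 : ℝ) ≤ m)]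
  simp only [monicJacobiCoeff]
  rw [show -(m : ℝ) = -(m : ℝ) - 1 + 1 by ring,
    show -((m + 1 : ℕ) : ℝ) = -(m : ℝ) - 1 by push_cast; ring]
  simp only [ascPochhammer_eval_add_one hA.ne', ascPochhammer_eval_add_one hD.ne',
    ascPochhammer_eval_add_one hM, ascPochhammer_succ_eval]
  field_simp
  push_cast
  ring

theorem monicJacobiCoeff_contiguous_left {A D : ℝ} (hA : 0 < A) (hD : 0 < D) (m k : ℕ) :
    monicJacobiCoeff A (D + 1) (m + 1) (k + 1) = monicJacobiCoeff (A + 1) (D + 1) m k -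
      (A + m) * D / ((D + m) * (D + m + 1)) * monicJacobiCoeff A D m (k + 1) := by
  have hM : -(m : ℝ) - 1 ≠ 0 := by linarith [(m.cast_nonneg : (0 : ℝ) ≤ m)]
  simp only [monicJacobiCoeff]
  rw [show -(m : ℝ) = -(m : ℝ) - 1 + 1 by ring,
    show -((m + 1 : ℕ) : ℝ) = -(m : ℝ) - 1 by push_cast; ring]
  simp only [ascPochhammer_eval_add_one hA.ne', ascPochhammer_eval_add_one hD.ne',
    ascPochhammer_eval_add_one hM, ascPochhammer_succ_eval, Nat.factorial_succ]
  field_simp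
  push_cast
  ring

theorem monicJacobiCoeff_contiguous_left_zero (A : ℝ) {D : ℝ} (hD : 0 < D) (m : ℕ) :
    monicJacobiCoeff A (D + 1) (m + 1) 0 =
      -((A + m) * D / ((D + m) * (D + m + 1)) * monicJacobiCoeff A D m 0) := by
  simp only [monicJacobiCoeff, ascPochhammer_zero, eval_one, ascPochhammer_eval_add_one hD.ne',
    ascPochhammer_succ_eval]
  field_simp
  push_cast
  ring

theorem monicJacobi_contiguous_right {A D : ℝ} (hA : 0 < A) (hD : 0 < D) (m : ℕ) (y : ℝ) :
    monicJacobi (A + 1) (D + 1) (m + 1) y = monicJacobi A D (m + 1) y -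
      (m + 1) * (D - A) / ((D + m) * (D + m + 1)) * monicJacobi (A + 1) D m y := by
  rw [monicJacobi, monicJacobi, monicJacobi_eq_sum_range (A + 1) D (by omega : m < m + 2),
    mul_sum, ← sum_sub_distrib]
  refine sum_congr rfl fun k _ => ?_
  rw [monicJacobiCoeff_contiguous_right hA hD]
  ring

theorem monicJacobi_contiguous_left {A D : ℝ} (hA : 0 < A) (hD : 0 < D) (m : ℕ) (y : ℝ) :
    monicJacobi A (D + 1) (m + 1) y = y * monicJacobi (A + 1) (D + 1) m y -
      (A + m) * D / ((D + m) * (D + m + 1)) * monicJacobi A D m y := by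
  have hterm : ∀ k ∈ range (m + 1),
      monicJacobiCoeff A (D + 1) (m + 1) (k + 1) * y ^ (k + 1) =
        y * (monicJacobiCoeff (A + 1) (D + 1) m k * y ^ k) -
          (A + m) * D / ((D + m) * (D + m + 1)) *
            (monicJacobiCoeff A D m (k + 1) * y ^ (k + 1)) := by
    intro k _
    rw [monicJacobiCoeff_contiguous_left hA hD]
    ring
  rw [monicJacobi, monicJacobi, monicJacobi_eq_sum_range A D (by omega : m < m + 2),
    sum_range_succ', sum_range_succ' _ (m + 1), sum_congr rfl hterm, sum_sub_distrib, ← mul_sum,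
    ← mul_sum, monicJacobiCoeff_contiguous_left_zero A hD]
  ring

theorem genGegenbauerSigma_two_mul (α β : ℝ) (m : ℕ) : genGegenbauerSigma α β (2 * m) =
    m * (m + β) / ((2 * m + α + β) * (2 * m + α + β + 1)) := by
  have hm : 2 * m / 2 = m := by omega
  simp only [genGegenbauerSigma, hm, even_two_mul, if_true]

theorem genGegenbauerSigma_two_mul_add_one (α β : ℝ) (m : ℕ) :
    genGegenbauerSigma α β (2 * m + 1) =
      (m + α + 1) * (m + α + β + 1) / ((2 * m + α + β + 1) * (2 * m + α + β + 2)) := by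
  have hm : (2 * m + 1) / 2 = m := by omega
  simp only [genGegenbauerSigma, hm, Nat.not_even_two_mul_add_one, if_false]

theorem eval_genGegenbauer_add_two (α β x : ℝ) (k : ℕ) :
    (genGegenbauer α β (k + 2)).eval x = x * (genGegenbauer α β (k + 1)).eval x -
      genGegenbauerSigma α β k * (genGegenbauer α β k).eval x := by
  simp [genGegenbauer]

theorem eval_genGegenbauer_eq_monicJacobi {α β : ℝ} (hα : -1 < α) (hβ : 0 < β) (m : ℕ)
    (x : ℝ) :
    (genGegenbauer α β (2 * m + 1)).eval x = monicJacobi (α + 1) (m + α + β + 1) m (x ^ 2) ∧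
      (genGegenbauer α β (2 * m + 2)).eval x =
        x * monicJacobi (α + 2) (m + α + β + 2) m (x ^ 2) := by
  induction m with
  | zero => simp [genGegenbauer, monicJacobi_zero]
  | succ m ih =>
    have hA : 0 < α + 1 := by linarith
    have hD : 0 < (m : ℝ) + α + β + 1 := by linarith [(m.cast_nonneg : (0 : ℝ) ≤ m)]
    have hD' : 0 < (m : ℝ) + α + β + 2 := by linarith
    have hE : (genGegenbauer α β (2 * (m + 1) + 1)).eval x =
        monicJacobi (α + 1) ((m + 1 : ℕ) + α + β + 1) (m + 1) (x ^ 2) := by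
      rw [show 2 * (m + 1) + 1 = 2 * m + 1 + 2 by ring, eval_genGegenbauer_add_two, ih.1, ih.2,
        genGegenbauerSigma_two_mul_add_one,
        show ((m + 1 : ℕ) : ℝ) + α + β + 1 = m + α + β + 1 + 1 by push_cast; ring,
        monicJacobi_contiguous_left hA hD, show α + 1 + 1 = α + 2 by ring,
        show (m : ℝ) + α + β + 1 + 1 = m + α + β + 2 by ring]
      ring
    refine ⟨hE, ?_⟩
    rw [eval_genGegenbauer_add_two, hE, genGegenbauerSigma_two_mul,
      show 2 * (m + 1) = 2 * m + 2 by ring, ih.2,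
      show ((m + 1 : ℕ) : ℝ) + α + β + 2 = m + α + β + 2 + 1 by push_cast; ring,
      show α + 2 = α + 1 + 1 by ring, monicJacobi_contiguous_right hA hD',
      show ((m + 1 : ℕ) : ℝ) + α + β + 1 = m + α + β + 2 by push_cast; ring]
    push_cast
    ring

/-- the `h → ∞` limit
`h⁻ⁿ Îₙ(hx; (β+1)/2 + ih, (β+1)/2 - ih, α+1) → Gₙ(x;α,β)` relates the generalized
symmetric Bannai–Ito polynomials to the monic generalized Gegenbauer polynomials. -/
theorem gsBannaiIto_to_genGegenbauer_limit
    (α β : ℝ) (hα : α > -1) (hβ : β > 0) (n : ℕ) (x : ℝ) :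
    Tendsto (fun h : ℝ =>
        ((h : ℂ) ^ n)⁻¹ *
          (gsBI (((β + 1) / 2 : ℝ) + I * (h : ℂ)) (((β + 1) / 2 : ℝ) - I * (h : ℂ))
              ((α + 1 : ℝ) : ℂ) n).eval ((h * x : ℝ) : ℂ))
      atTop (nhds (((genGegenbauer α β (n + 1)).eval x : ℝ) : ℂ)) := by
  obtain ⟨m, rfl | rfl⟩ := Nat.even_or_odd' n
  · rw [(eval_genGegenbauer_eq_monicJacobi hα hβ m x).1,
      show (m : ℝ) + α + β + 1 = m + 2 * ((β + 1) / 2) + (α + 1) - 1 by ring]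
    exact tendsto_eval_gsBI_two_mul ((β + 1) / 2) (α + 1) x m
  · rw [(eval_genGegenbauer_eq_monicJacobi hα hβ m x).2, show α + 2 = α + 1 + 1 by ring,
      show (m : ℝ) + α + β + 2 = m + 2 * ((β + 1) / 2) + (α + 1) by ring]
    exact tendsto_eval_gsBI_two_mul_add_one ((β + 1) / 2) (α + 1) x m
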